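/- Under the same differentiation-under-the-integral conditions, the Hyvärinen score of the predictive density decomposes as H(y_t, p(·|y_{1:t-1})) = E_t[ H(y_t, p(·|θ)) ] + Var_t[ (d/dy_t) log p(y_t|θ) ], where E_t and Var_t are posterior expectation and variance over θ ~ p(dθ|y_{1:t}). -/

import Mathlib

/-!
For a positive density `g`, `H(y, g) = 2 g''/g - (g'/g)²`. Differentiating the predictive density
`M(y) = ∫ f(y, θ) π(θ) dθ` twice under the integral sign (dominated by `h1`, `h2`) gives
`M'(y₀)/M(y₀) = E[f'/f]` and `M''(y₀)/M(y₀) = E[f''/f]`, where `E` is the expectation under the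
posterior density `f(y₀, θ) π(θ) / M(y₀)`. Hence `H(y₀, M) = 2 E[f''/f] - E[f'/f]²`, while
`E[H(y₀, f)] = 2 E[f''/f] - E[(f'/f)²]`; the difference is the posterior variance of the score.

The one analytic point beyond dominated differentiation is that `E[(f'/f)²]` is finite. It follows
from the elementary bound `g'² ≤ 2 b g` for a nonnegative `g` with `g'' ≤ b` (a nonnegative
function lying below its second-order Taylor majorant), applied to `g = π(θ) f(·, θ)`, `b = h2(θ)`.
-/

open MeasureTheory Topology Set

noncomputable def hyvScore (p : ℝ → ℝ) (y : ℝ) : ℝ :=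
  2 * deriv (deriv (fun w => Real.log (p w))) y + (deriv (fun w => Real.log (p w)) y) ^ 2

section Calculus

variable {g g₁ g₂ : ℝ → ℝ}

theorem deriv_log_comp_eq_div (hpos : ∀ x, 0 < g x) (hg : ∀ x, HasDerivAt g (g₁ x) x) :
    deriv (fun x => Real.log (g x)) = fun x => g₁ x / g x :=
  funext fun x => ((hg x).log (hpos x).ne').deriv

theorem hyvScore_eq_of_hasDerivAt (hpos : ∀ x, 0 < g x) (hg : ∀ x, HasDerivAt g (g₁ x) x)
    (hg₁ : ∀ x, HasDerivAt g₁ (g₂ x) x) (y : ℝ) :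
    hyvScore g y = 2 * (g₂ y / g y) - (g₁ y / g y) ^ 2 := by
  have hlog₂ : HasDerivAt (fun x => g₁ x / g x) ((g₂ y * g y - g₁ y * g₁ y) / g y ^ 2) y :=
    (hg₁ y).div (hg y) (hpos y).ne'
  rw [hyvScore, deriv_log_comp_eq_div hpos hg, hlog₂.deriv]
  field_simp [(hpos y).ne']
  ring

theorem le_add_deriv_mul_add_of_deriv2_le {b : ℝ} (hg : ∀ x, HasDerivAt g (g₁ x) x)
    (hg₁ : ∀ x, HasDerivAt g₁ (g₂ x) x) (hb : ∀ x, g₂ x ≤ b) (x y : ℝ) :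
    g x ≤ g y + g₁ y * (x - y) + b / 2 * (x - y) ^ 2 := by
  -- `k` is convex with a critical point at `y`, hence minimal there.
  set k : ℝ → ℝ := fun x => b / 2 * (x - y) ^ 2 + g₁ y * (x - y) - g x
  have hk : ∀ x, HasDerivAt k (b * (x - y) + g₁ y - g₁ x) x := by
    intro x
    have hx : HasDerivAt (fun x : ℝ => x - y) 1 x := (hasDerivAt_id x).sub_const y
    exact (((hx.pow 2).const_mul (b / 2)).add (hx.const_mul (g₁ y)) |>.sub (hg x)).congr_deriv
      (by norm_num; ring)
  have hk' : ∀ x, HasDerivAt (fun x => b * (x - y) + g₁ y - g₁ x) (b - g₂ x) x := fun x =>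
    (((hasDerivAt_id x).sub_const y).const_mul b |>.add_const (g₁ y) |>.sub (hg₁ x)).congr_deriv
      (by ring)
  have hconvex : ConvexOn ℝ univ k :=
    convexOn_of_hasDerivWithinAt2_nonneg convex_univ
      (fun x _ => (hk x).continuousAt.continuousWithinAt) (fun x _ => (hk x).hasDerivWithinAt)
      (fun x _ => (hk' x).hasDerivWithinAt) (fun x _ => sub_nonneg.2 (hb x))
  have hmin : IsMinOn k univ y := by
    refine hconvex.isMinOn_of_rightDeriv_eq_zero (by simp) ?_
    rw [(hk y).hasDerivWithinAt.derivWithin (uniqueDiffWithinAt_Ioi y)]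
    ring
  have hkx : k y ≤ k x := hmin (mem_univ x)
  simp only [k, sub_self] at hkx
  linarith

theorem sq_deriv_le_of_nonneg_of_deriv2_le {b : ℝ} (hnn : ∀ x, 0 ≤ g x)
    (hg : ∀ x, HasDerivAt g (g₁ x) x) (hg₁ : ∀ x, HasDerivAt g₁ (g₂ x) x) (hb : ∀ x, g₂ x ≤ b)
    (y : ℝ) : g₁ y ^ 2 ≤ 2 * b * g y := by
  have hquad : ∀ t, 0 ≤ b / 2 * (t * t) + g₁ y * t + g y := fun t => by
    have := le_add_deriv_mul_add_of_deriv2_le hg hg₁ hb (y + t) y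
    simp only [add_sub_cancel_left] at this
    nlinarith [hnn (y + t)]
  have := discrim_le_zero hquad
  rw [discrim] at this
  linarith

end Calculus

section ParametricIntegral

variable {Θ E : Type*} [MeasurableSpace Θ] {ν : Measure Θ} [NormedAddCommGroup E] [NormedSpace ℝ E]

theorem aestronglyMeasurable_of_hasDerivAt {F : ℝ → Θ → E} {F' : Θ → E} {y : ℝ}
    (hF_meas : ∀ x, AEStronglyMeasurable (F x) ν)
    (hF : ∀ᵐ θ ∂ν, HasDerivAt (F · θ) (F' θ) y) : AEStronglyMeasurable F' ν :=
  aestronglyMeasurable_of_tendsto_ae (𝓝[≠] y) (f := fun x θ => slope (F · θ) y x)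
    (fun x => ((hF_meas x).sub (hF_meas y)).const_smul _)
    (hF.mono fun _ hθ => hθ.tendsto_slope)

theorem hasDerivAt_integral_of_forall_deriv_le {F F' : ℝ → Θ → E} {bound : Θ → ℝ}
    (hF_int : ∀ x, Integrable (F x) ν) (hF' : ∀ᵐ θ ∂ν, ∀ x, HasDerivAt (F · θ) (F' x θ) x)
    (h_bound : ∀ᵐ θ ∂ν, ∀ x, ‖F' x θ‖ ≤ bound θ) (bound_int : Integrable bound ν) (y : ℝ) :
    Integrable (F' y) ν ∧ HasDerivAt (fun x => ∫ θ, F x θ ∂ν) (∫ θ, F' y θ ∂ν) y :=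
  hasDerivAt_integral_of_dominated_loc_of_deriv_le Filter.univ_mem
    (.of_forall fun x => (hF_int x).aestronglyMeasurable) (hF_int y)
    (aestronglyMeasurable_of_hasDerivAt (fun x => (hF_int x).aestronglyMeasurable)
      (hF'.mono fun _ h => h y))
    (h_bound.mono fun _ h x _ => h x) bound_int (hF'.mono fun _ h x _ => h x)

end ParametricIntegral

section Integrability

variable {Θ : Type*} [MeasurableSpace Θ] {ν : Measure Θ}

theorem integral_mul_pos {g p : Θ → ℝ} (hg : ∀ θ, 0 < g θ) (hp : ∀ θ, 0 ≤ p θ)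
    (hgp : Integrable (fun θ => g θ * p θ) ν) (hp_pos : 0 < ∫ θ, p θ ∂ν) :
    0 < ∫ θ, g θ * p θ ∂ν := by
  have hsupp : Function.support (fun θ => g θ * p θ) = Function.support p := by
    ext θ
    simp [(hg θ).ne']
  rw [integral_pos_iff_support_of_nonneg (fun θ => mul_nonneg (hg θ).le (hp θ)) hgp, hsupp,
    ← integral_pos_iff_support_of_nonneg hp (.of_integral_ne_zero hp_pos.ne')]
  exact hp_pos

theorem integrable_sq_div_of_sq_le_mul {u v b : Θ → ℝ} (hu : AEStronglyMeasurable u ν)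
    (hv : AEStronglyMeasurable v ν) (hb : Integrable b ν) (hv_nonneg : ∀ θ, 0 ≤ v θ)
    (hle : ∀ θ, u θ ^ 2 ≤ b θ * v θ) : Integrable (fun θ => u θ ^ 2 / v θ) ν := by
  refine hb.mono ((hu.aemeasurable.pow_const 2).div hv.aemeasurable).aestronglyMeasurable
    (.of_forall fun θ => ?_)
  rw [Real.norm_of_nonneg (div_nonneg (sq_nonneg _) (hv_nonneg θ)), Real.norm_eq_abs]
  exact div_le_of_le_mul₀ (hv_nonneg θ) (abs_nonneg _)
    ((hle θ).trans (mul_le_mul_of_nonneg_right (le_abs_self _) (hv_nonneg θ)))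

end Integrability

section Posterior

variable {Θ : Type*} [MeasurableSpace Θ] {ν : Measure Θ} {F F' : ℝ → Θ → ℝ} {p b : Θ → ℝ}

theorem hasDerivAt_integral_mul_of_abs_mul_deriv_le
    (hF_int : ∀ x, Integrable (fun θ => F x θ * p θ) ν)
    (hF' : ∀ θ x, HasDerivAt (F · θ) (F' x θ) x) (h_bound : ∀ x θ, |p θ * F' x θ| ≤ b θ)
    (hb : Integrable b ν) (y : ℝ) :
    Integrable (fun θ => F' y θ * p θ) ν ∧
      HasDerivAt (fun x => ∫ θ, F x θ * p θ ∂ν) (∫ θ, F' y θ * p θ ∂ν) y :=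
  hasDerivAt_integral_of_forall_deriv_le hF_int (.of_forall fun θ x => (hF' θ x).mul_const (p θ))
    (.of_forall fun θ x => by rw [Real.norm_eq_abs, mul_comm]; exact h_bound x θ) hb y

theorem integrable_sq_div_mul_posterior {F'' : ℝ → Θ → ℝ} (hF_pos : ∀ x θ, 0 < F x θ)
    (hp : ∀ θ, 0 ≤ p θ) (hF' : ∀ θ x, HasDerivAt (F · θ) (F' x θ) x)
    (hF'' : ∀ θ x, HasDerivAt (F' · θ) (F'' x θ) x) (h_bound : ∀ x θ, |p θ * F'' x θ| ≤ b θ)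
    (hb : Integrable b ν) {y : ℝ} (hF_meas : AEStronglyMeasurable (fun θ => F y θ * p θ) ν)
    (hF'_meas : AEStronglyMeasurable (fun θ => F' y θ * p θ) ν) (Z : ℝ) :
    Integrable (fun θ => (F' y θ / F y θ) ^ 2 * (F y θ * p θ / Z)) ν := by
  have hsq : ∀ θ, (F' y θ / F y θ) ^ 2 * (F y θ * p θ / Z) =
      (F' y θ * p θ) ^ 2 / (F y θ * p θ) / Z := fun θ => by
    rcases eq_or_ne (p θ) 0 with hp0 | hp0
    · simp [hp0]
    · field_simp [(hF_pos y θ).ne']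
  simp only [hsq]
  refine (integrable_sq_div_of_sq_le_mul hF'_meas hF_meas (hb.const_mul 2)
    (fun θ => mul_nonneg (hF_pos y θ).le (hp θ)) fun θ => ?_).div_const Z
  exact sq_deriv_le_of_nonneg_of_deriv2_le (fun x => mul_nonneg (hF_pos x θ).le (hp θ))
    (fun x => (hF' θ x).mul_const (p θ)) (fun x => (hF'' θ x).mul_const (p θ))
    (fun x => (le_abs_self _).trans (mul_comm (p θ) _ ▸ h_bound x θ)) y

end Posterior

theorem hyvScore_predictive_decomposition_general
    {Θ : Type*} [MeasurableSpace Θ] (ν : Measure Θ)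
    (prior : Θ → ℝ) (f : ℝ → Θ → ℝ)
    (hprior_nonneg : ∀ θ, 0 ≤ prior θ) (hprior_prob : ∫ θ, prior θ ∂ν = 1)
    (hf_pos : ∀ y θ, 0 < f y θ)
    (hf_smooth : ∀ θ, ContDiff ℝ 2 (fun y => f y θ))
    (hf_int : ∀ y, Integrable (fun θ => f y θ * prior θ) ν)
    (h1 h2 : Θ → ℝ) (h1_int : Integrable h1 ν) (h2_int : Integrable h2 ν)
    (hdom1 : ∀ y θ, |prior θ * deriv (fun z => f z θ) y| ≤ h1 θ)
    (hdom2 : ∀ y θ, |prior θ * deriv (deriv (fun z => f z θ)) y| ≤ h2 θ)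
    (y₀ : ℝ) :
    hyvScore (fun y => ∫ θ, f y θ * prior θ ∂ν) y₀ =
      (∫ θ, hyvScore (fun y => f y θ) y₀ *
          (f y₀ θ * prior θ / ∫ θ', f y₀ θ' * prior θ' ∂ν) ∂ν) +
        ((∫ θ, (deriv (fun y => Real.log (f y θ)) y₀) ^ 2 *
            (f y₀ θ * prior θ / ∫ θ', f y₀ θ' * prior θ' ∂ν) ∂ν) -
          (∫ θ, deriv (fun y => Real.log (f y θ)) y₀ *
            (f y₀ θ * prior θ / ∫ θ', f y₀ θ' * prior θ' ∂ν) ∂ν) ^ 2) := by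
  have hf₁ : ∀ θ x, HasDerivAt (f · θ) (deriv (f · θ) x) x := fun θ x =>
    ((hf_smooth θ).differentiable two_ne_zero x).hasDerivAt
  have hf₂ : ∀ θ x, HasDerivAt (deriv (f · θ)) (deriv (deriv (f · θ)) x) x := fun θ x =>
    ((hf_smooth θ).differentiable_deriv_two x).hasDerivAt
  have hM₁ := hasDerivAt_integral_mul_of_abs_mul_deriv_le hf_int hf₁ hdom1 h1_int
  have hM₂ := hasDerivAt_integral_mul_of_abs_mul_deriv_le (fun x => (hM₁ x).1) hf₂ hdom2 h2_int
  have hM_pos : ∀ y, 0 < ∫ θ, f y θ * prior θ ∂ν := fun y =>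
    integral_mul_pos (hf_pos y) hprior_nonneg (hf_int y) (hprior_prob ▸ one_pos)
  have hscore : ∀ θ, deriv (fun y => Real.log (f y θ)) y₀ = deriv (f · θ) y₀ / f y₀ θ :=
    fun θ => congrFun (deriv_log_comp_eq_div (hf_pos · θ) (hf₁ θ)) y₀
  have hhyv : ∀ θ, hyvScore (f · θ) y₀ =
      2 * (deriv (deriv (f · θ)) y₀ / f y₀ θ) - (deriv (f · θ) y₀ / f y₀ θ) ^ 2 :=
    fun θ => hyvScore_eq_of_hasDerivAt (hf_pos · θ) (hf₁ θ) (hf₂ θ) y₀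
  rw [hyvScore_eq_of_hasDerivAt hM_pos (fun x => (hM₁ x).2) (fun x => (hM₂ x).2)]
  simp only [hscore, hhyv]
  set Z := ∫ θ, f y₀ θ * prior θ ∂ν
  have hposterior : ∀ (a : ℝ) θ, a / f y₀ θ * (f y₀ θ * prior θ / Z) = a * prior θ / Z :=
    fun a θ => by field_simp [(hf_pos y₀ θ).ne']
  have hsq_int := integrable_sq_div_mul_posterior hf_pos hprior_nonneg hf₁ hf₂ hdom2 h2_int
    (hf_int y₀).aestronglyMeasurable (hM₁ y₀).1.aestronglyMeasurable Z
  simp only [sub_mul, mul_assoc (2 : ℝ), hposterior]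
  rw [integral_sub (((hM₂ y₀).1.div_const Z).const_mul 2) hsq_int, integral_const_mul]
  simp only [integral_div]
  ring

/-- The Hyvärinen score of the Bayesian predictive density decomposes as the posterior
expectation of the conditional Hyvärinen scores plus the posterior variance of the
conditional score functions. -/
theorem hyvScore_predictive_decomposition
    {Θ : Type*} [MeasurableSpace Θ] (ν : Measure Θ) [SigmaFinite ν]
    (prior : Θ → ℝ) (f : ℝ → Θ → ℝ)
    (hprior_nonneg : ∀ θ, 0 ≤ prior θ) (hprior_prob : ∫ θ, prior θ ∂ν = 1)
    (hf_pos : ∀ y θ, 0 < f y θ)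
    (hf_smooth : ∀ θ, ContDiff ℝ 2 (fun y => f y θ))
    (hf_int : ∀ y, Integrable (fun θ => f y θ * prior θ) ν)
    (h1 h2 : Θ → ℝ) (h1_int : Integrable h1 ν) (h2_int : Integrable h2 ν)
    (hdom1 : ∀ y θ, |prior θ * deriv (fun z => f z θ) y| ≤ h1 θ)
    (hdom2 : ∀ y θ, |prior θ * deriv (deriv (fun z => f z θ)) y| ≤ h2 θ)
    (y₀ : ℝ) :
    hyvScore (fun y => ∫ θ, f y θ * prior θ ∂ν) y₀ =
      (∫ θ, hyvScore (fun y => f y θ) y₀ *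
          (f y₀ θ * prior θ / ∫ θ', f y₀ θ' * prior θ' ∂ν) ∂ν) +
        ((∫ θ, (deriv (fun y => Real.log (f y θ)) y₀) ^ 2 *
            (f y₀ θ * prior θ / ∫ θ', f y₀ θ' * prior θ' ∂ν) ∂ν) -
          (∫ θ, deriv (fun y => Real.log (f y θ)) y₀ *
            (f y₀ θ * prior θ / ∫ θ', f y₀ θ' * prior θ' ∂ν) ∂ν) ^ 2) :=
  hyvScore_predictive_decomposition_general ν prior f hprior_nonneg hprior_prob hf_pos hf_smooth
    hf_int h1 h2 h1_int h2_int hdom1 hdom2 y₀
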